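/- arXiv:1907.10991 — 2 statements merged into one kernel-verified Lean document; each statement's English description precedes it below -/
import Mathlib

section
/- Let c² > 1, K_W > 0, κ > K_W/(c²−1)², and define K* = (κ(c²−1)² − K_W)/(c²(c²−1)), Λ* = cK_W/(κ(c²−1)² − K_W), K_Z* = κ − (Λ*)²K*. Then K* satisfies the generalized algebraic Riccati equation K* = c²K* + K_W − (K_W + cK*(Λ*+c))²/(K_Z* + K_W + (Λ*+c)²K*). -/
/-!
With `a = c² - 1` and `D = κa² - K_W`, the closed forms give `Λ* + c = cκa²/D`, hence
`K_W + cK*(Λ* + c) = κa + K_W` and `K_Z* + K_W + (Λ* + c)²K* = c²(κa + K_W)/a`. Both sides of the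
Riccati equation then equal `a(κa + K_W)/c²` (also when `κa + K_W = 0`, where both are `0`), so
the identity holds over any field once `c`, `a` and `D` are nonzero.
-/

theorem riccati_closedForm {F : Type*} [Field F] {c K_W κ : F} (hc : c ≠ 0)
    (ha : c ^ 2 - 1 ≠ 0) (hD : κ * (c ^ 2 - 1) ^ 2 - K_W ≠ 0) :
    let Kstar := (κ * (c ^ 2 - 1) ^ 2 - K_W) / (c ^ 2 * (c ^ 2 - 1))
    let Λstar := c * K_W / (κ * (c ^ 2 - 1) ^ 2 - K_W)
    let KZstar := κ - Λstar ^ 2 * Kstar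
    Kstar = c ^ 2 * Kstar + K_W -
      (K_W + c * Kstar * (Λstar + c)) ^ 2 /
        (KZstar + K_W + (Λstar + c) ^ 2 * Kstar) := by
  intro K Λ KZ
  have hgain : K_W + c * K * (Λ + c) = κ * (c ^ 2 - 1) + K_W := by
    simp only [K, Λ]
    field_simp
    ring
  have hinnovation :
      KZ + K_W + (Λ + c) ^ 2 * K = c ^ 2 * (κ * (c ^ 2 - 1) + K_W) / (c ^ 2 - 1) := by
    simp only [KZ, K, Λ]
    field_simp
    ring
  rw [hgain, hinnovation]
  simp only [K]
  field_simp
  ring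

theorem stmt10_general (c K_W κ : ℝ) (hc : 1 < c ^ 2)
    (hκ : K_W / (c ^ 2 - 1) ^ 2 < κ) :
    let Kstar := (κ * (c ^ 2 - 1) ^ 2 - K_W) / (c ^ 2 * (c ^ 2 - 1))
    let Λstar := c * K_W / (κ * (c ^ 2 - 1) ^ 2 - K_W)
    let KZstar := κ - Λstar ^ 2 * Kstar
    Kstar = c ^ 2 * Kstar + K_W -
      (K_W + c * Kstar * (Λstar + c)) ^ 2 /
        (KZstar + K_W + (Λstar + c) ^ 2 * Kstar) := by
  have ha : 0 < c ^ 2 - 1 := sub_pos.mpr hc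
  have hD : 0 < κ * (c ^ 2 - 1) ^ 2 - K_W :=
    sub_pos.mpr ((div_lt_iff₀ (pow_pos ha 2)).mp hκ)
  refine riccati_closedForm ?_ ha.ne' hD.ne'
  rintro rfl
  norm_num at hc

/-- The closed-form optimal feedback triple `(K*, Λ*, K_Z*)` satisfies the
generalized algebraic Riccati equation. -/
theorem stmt10 (c K_W κ : ℝ) (hc : 1 < c ^ 2) (hKW : 0 < K_W)
    (hκ : K_W / (c ^ 2 - 1) ^ 2 < κ) :
    let Kstar := (κ * (c ^ 2 - 1) ^ 2 - K_W) / (c ^ 2 * (c ^ 2 - 1))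
    let Λstar := c * K_W / (κ * (c ^ 2 - 1) ^ 2 - K_W)
    let KZstar := κ - Λstar ^ 2 * Kstar
    Kstar = c ^ 2 * Kstar + K_W -
      (K_W + c * Kstar * (Λstar + c)) ^ 2 /
        (KZstar + K_W + (Λstar + c) ^ 2 * Kstar) :=
  stmt10_general c K_W κ hc hκ
end

section
/- Let K_W > 0, c ≠ 0, c² ≠ 1, κ ≥ 0. The quadratic equation c⁴(c²−1)K² + c⁴((1−c²)κ + K_W)K + ((1−c²)κ + K_W)² + 4(c²−1)K_Wκ − c⁴κK_W = 0 has discriminant (with respect to K, after dividing by c⁴(c²−1)) equal to a perfect square, and its two roots are K₁ = (κ(c²−1)² − K_W)/(c²(c²−1)) and K₂ = (κ − K_W)/c². -/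
/-- The quadratic in `K` arising from the Lagrangian stationarity conditions
has discriminant equal to the perfect square `(c²(c²−2)(κc²−κ+K_W))²` and
exactly the two roots `K₁ = (κ(c²−1)²−K_W)/(c²(c²−1))` and
`K₂ = (κ−K_W)/c²`. -/
theorem stmt18 (c K_W κ : ℝ) (hKW : 0 < K_W) (hc : c ≠ 0)
    (hc1 : c ^ 2 ≠ 1) (hκ : 0 ≤ κ) :
    (c ^ 4 * ((1 - c ^ 2) * κ + K_W)) ^ 2 -
      4 * (c ^ 4 * (c ^ 2 - 1)) *
        (((1 - c ^ 2) * κ + K_W) ^ 2 + 4 * (c ^ 2 - 1) * K_W * κ -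
          c ^ 4 * κ * K_W) =
      (c ^ 2 * (c ^ 2 - 2) * (κ * c ^ 2 - κ + K_W)) ^ 2 ∧
    (∀ K : ℝ,
      c ^ 4 * (c ^ 2 - 1) * K ^ 2 +
        c ^ 4 * ((1 - c ^ 2) * κ + K_W) * K +
        (((1 - c ^ 2) * κ + K_W) ^ 2 + 4 * (c ^ 2 - 1) * K_W * κ -
          c ^ 4 * κ * K_W) = 0 ↔
      K = (κ * (c ^ 2 - 1) ^ 2 - K_W) / (c ^ 2 * (c ^ 2 - 1)) ∨
      K = (κ - K_W) / c ^ 2) := by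
  have h2 : c ^ 2 ≠ 0 := pow_ne_zero _ hc
  have h3 : c ^ 2 - 1 ≠ 0 := sub_ne_zero.mpr hc1
  have h4 : c ^ 2 * (c ^ 2 - 1) ≠ 0 := mul_ne_zero h2 h3
  constructor
  · ring
  · intro K
    rw [show c ^ 4 * (c ^ 2 - 1) * K ^ 2 +
        c ^ 4 * ((1 - c ^ 2) * κ + K_W) * K +
        (((1 - c ^ 2) * κ + K_W) ^ 2 + 4 * (c ^ 2 - 1) * K_W * κ -
          c ^ 4 * κ * K_W) =
        (c ^ 2 * (c ^ 2 - 1) * K - (κ * (c ^ 2 - 1) ^ 2 - K_W)) *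
          (c ^ 2 * K - (κ - K_W)) from by ring]
    rw [mul_eq_zero, sub_eq_zero, sub_eq_zero]
    rw [eq_div_iff h4, eq_div_iff h2]
    constructor
    · rintro (h | h)
      · exact Or.inl (by linarith [h])
      · exact Or.inr (by linarith [h])
    · rintro (h | h)
      · exact Or.inl (by linarith [h])
      · exact Or.inr (by linarith [h])
end
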